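/- arXiv:2605.14446 — 4 statements merged into one kernel-verified Lean document; each statement's English description precedes it below -/
import Mathlib

section
/- For all integers n ≥ 1 and distinct nonzero complex (or real) numbers y_1, …, y_n with n ≤ N, the symmetrization identity holds: ∑_{j=1}^{n} 1/(y_j^{N-n+1} · ∏_{k≠j} (y_j - y_k)) = (-1)^{n-1} · ∑_{(m_1,…,m_n) ∈ ℤ_{>0}^n, m_1+⋯+m_n = N} ∏_{j=1}^{n} 1/y_j^{m_j}. -/
open Finset

open Polynomial in

lemma key_pf {n : ℕ} (hn : 2 ≤ n) (z : Fin n → ℂ) (hz : Function.Injective z) :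
    ∑ j : Fin n, (∏ k ∈ univ.erase j, (z j - z k))⁻¹ = 0 := by
  have : NeZero n := ⟨by omega⟩
  have h1 := Lagrange.sum_basis (s := (univ : Finset (Fin n))) (v := z) hz.injOn univ_nonempty
  have h2 := congrArg (fun p : ℂ[X] => p.coeff (n - 1)) h1
  simp only [finset_sum_coeff] at h2
  have hb : ∀ j : Fin n, (Lagrange.basis univ z j).coeff (n - 1)
      = (∏ k ∈ univ.erase j, (z j - z k))⁻¹ := by
    intro j
    have hP : (∏ k ∈ univ.erase j, (X - C (z k))).Monic :=
      monic_prod_of_monic _ _ fun k _ => monic_X_sub_C _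
    have hdeg : (∏ k ∈ univ.erase j, (X - C (z k))).natDegree = n - 1 := by
      rw [natDegree_prod_of_monic _ _ fun k _ => monic_X_sub_C _]
      simp [card_erase_of_mem]
    rw [Lagrange.basis]
    have : ∀ k ∈ univ.erase j, Lagrange.basisDivisor (z j) (z k)
        = C ((z j - z k)⁻¹) * (X - C (z k)) := fun k _ => rfl
    rw [prod_congr rfl this, prod_mul_distrib, ← map_prod, coeff_C_mul, ← prod_inv_distrib,
      ← hdeg, hP.coeff_natDegree, mul_one]
  rw [sum_congr rfl (fun j _ => hb j)] at h2
  rw [h2, coeff_one, if_neg (by omega)]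

lemma erase_last_eq {n : ℕ} :
    (univ : Finset (Fin (n+1))).erase (Fin.last n) = univ.map Fin.castSuccEmb := by
  rw [Fin.univ_castSuccEmb, Finset.erase_cons]

lemma erase_cs {n : ℕ} (i : Fin n) :
    (univ : Finset (Fin (n+1))).erase (Fin.castSucc i)
      = insert (Fin.last n) ((univ.erase i).map Fin.castSuccEmb) := by
  rw [Fin.univ_castSuccEmb, Finset.cons_eq_insert,
    Finset.erase_insert_of_ne (Fin.castSucc_lt_last i).ne', Finset.map_erase]
  rfl

lemma prod_erase_cs {n : ℕ} (g : Fin (n+1) → ℂ) (i : Fin n) :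
    ∏ k ∈ univ.erase (Fin.castSucc i), g k
      = g (Fin.last n) * ∏ k ∈ univ.erase i, g (Fin.castSucc k) := by
  rw [erase_cs, Finset.prod_insert (by
    simp only [Finset.mem_map, Fin.coe_castSuccEmb]
    rintro ⟨x, -, hx⟩
    exact (Fin.castSucc_lt_last x).ne hx), Finset.prod_map]
  rfl

lemma prod_erase_last {n : ℕ} (g : Fin (n+1) → ℂ) :
    ∏ k ∈ univ.erase (Fin.last n), g k = ∏ k : Fin n, g (Fin.castSucc k) := by
  rw [erase_last_eq, Finset.prod_map]; rfl

lemma geom_aux (a b : ℂ) (ha : a ≠ 0) (hb : b ≠ 0) (M : ℕ) :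
    (b - a) * ∑ m ∈ Finset.Icc 1 M, a⁻¹ ^ m * b⁻¹ ^ (M + 1 - m) = a⁻¹ ^ M - b⁻¹ ^ M := by
  have ha' : a * a⁻¹ = 1 := mul_inv_cancel₀ ha
  have hb' : b * b⁻¹ = 1 := mul_inv_cancel₀ hb
  have h : ∑ m ∈ Finset.Icc 1 M, (b - a) * (a⁻¹ ^ m * b⁻¹ ^ (M + 1 - m))
      = ∑ i ∈ Finset.range M, (a⁻¹ ^ (i+1) * b⁻¹ ^ (M - (i+1)) - a⁻¹ ^ i * b⁻¹ ^ (M - i)) := by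
    rw [show Finset.Icc 1 M = Finset.Ico 1 (M+1) by rfl, Finset.sum_Ico_eq_sum_range]
    refine Finset.sum_congr (by norm_num) fun i hi => ?_
    simp only [Finset.mem_range] at hi
    have h1 : M + 1 - (1 + i) = M - i := by omega
    have h2 : M - i = (M - (i+1)) + 1 := by omega
    rw [h1, add_comm 1 i, h2, pow_succ, pow_succ]
    linear_combination (a⁻¹ ^ i * a⁻¹ * b⁻¹ ^ (M - (i+1))) * hb'
      - (a⁻¹ ^ i * b⁻¹ ^ (M - (i+1)) * b⁻¹) * ha'
  rw [mul_sum, h, Finset.sum_range_sub (fun i => a⁻¹ ^ i * b⁻¹ ^ (M - i))]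
  simp

lemma comp_rec (n N : ℕ) (hn : 1 ≤ n) (hnN : n + 1 ≤ N) (f : Fin (n+1) → ℕ → ℂ) :
    ∑ m ∈ (Fintype.piFinset fun _ : Fin (n+1) => Finset.Icc 1 N).filter (fun m => ∑ j, m j = N),
        ∏ j, f j (m j)
      = ∑ t ∈ Finset.Icc 1 (N - n), f (Fin.last n) t *
          ∑ m ∈ (Fintype.piFinset fun _ : Fin n => Finset.Icc 1 (N - t)).filter
              (fun m => ∑ j, m j = N - t),
            ∏ j, f (Fin.castSucc j) (m j) := by
  simp_rw [Finset.mul_sum]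
  rw [Finset.sum_sigma']
  refine Finset.sum_nbij' (fun m => ⟨m (Fin.last n), fun j => m (Fin.castSucc j)⟩)
    (fun p => Fin.snoc p.2 p.1) ?_ ?_ ?_ ?_ ?_
  · intro m hm
    simp only [Finset.mem_filter, Fintype.mem_piFinset, Finset.mem_Icc] at hm
    obtain ⟨h1, h2⟩ := hm
    rw [Fin.sum_univ_castSucc] at h2
    have hs : n ≤ ∑ j : Fin n, m (Fin.castSucc j) := by
      calc n = ∑ _j : Fin n, 1 := by simp
      _ ≤ _ := Finset.sum_le_sum fun j _ => (h1 (Fin.castSucc j)).1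
    have hsingle : ∀ j : Fin n, m (Fin.castSucc j) ≤ ∑ k : Fin n, m (Fin.castSucc k) :=
      fun j => Finset.single_le_sum (f := fun k : Fin n => m (Fin.castSucc k))
        (fun k _ => Nat.zero_le _) (Finset.mem_univ j)
    simp only [Finset.mem_sigma, Finset.mem_filter, Fintype.mem_piFinset, Finset.mem_Icc]
    refine ⟨⟨(h1 (Fin.last n)).1, by omega⟩, fun j => ⟨(h1 (Fin.castSucc j)).1, ?_⟩, by omega⟩
    have := hsingle j; omega
  · intro p hp
    simp only [Finset.mem_sigma, Finset.mem_filter, Fintype.mem_piFinset, Finset.mem_Icc] at hp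
    obtain ⟨ht, h1, h2⟩ := hp
    simp only [Finset.mem_filter, Fintype.mem_piFinset, Finset.mem_Icc]
    constructor
    · intro j
      induction j using Fin.lastCases with
      | last => simp only [Fin.snoc_last]; omega
      | cast j =>
        rw [Fin.snoc_castSucc]
        exact ⟨(h1 j).1, le_trans (h1 j).2 (by omega)⟩
    · rw [Fin.sum_univ_castSucc]
      simp only [Fin.snoc_castSucc, Fin.snoc_last, h2]
      omega
  · intro m _
    funext j
    induction j using Fin.lastCases with
    | last => simp
    | cast j => simp
  · rintro ⟨t, m'⟩ _
    have h : (fun j => (Fin.snoc m' t : Fin (n+1) → ℕ) (Fin.castSucc j)) = m' :=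
      funext fun j => by simp
    simp only [Fin.snoc_last, h]
  · intro m _
    rw [Fin.prod_univ_castSucc, mul_comm]

lemma sign_shuffle (s c A S : ℂ) (h1 : A = s * S) (hsq : s * s = 1) :
    c * S = s * (c * A) := by
  rw [h1, show s * (c * (s * S)) = s * s * (c * S) by ring, hsq, one_mul]

lemma aux_main : ∀ n : ℕ, 1 ≤ n → ∀ N : ℕ, n ≤ N → ∀ y : Fin n → ℂ,
    (∀ j, y j ≠ 0) → Function.Injective y →
    ∑ j : Fin n, 1 / (y j ^ (N - n + 1) * ∏ k ∈ Finset.univ.erase j, (y j - y k))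
      = (-1 : ℂ) ^ (n - 1) *
        ∑ m ∈ (Fintype.piFinset fun _ : Fin n => Finset.Icc 1 N).filter
            (fun m => ∑ j, m j = N),
          ∏ j : Fin n, 1 / y j ^ (m j) := by
  intro n
  induction n with
  | zero => intro h; exact absurd h (by omega)
  | succ n IH =>
    intro _ N hnN y hy0 hinj
    rcases Nat.eq_zero_or_pos n with rfl | hn
    · -- base case n = 1
      have hset : (Fintype.piFinset fun _ : Fin 1 => Finset.Icc 1 N).filter
          (fun m => ∑ j, m j = N) = {fun _ => N} := by
        ext m
        simp only [Finset.mem_filter, Fintype.mem_piFinset, Finset.mem_Icc, Finset.mem_singleton,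
          Fin.sum_univ_one]
        constructor
        · rintro ⟨_, h2⟩
          funext j
          rw [Subsingleton.elim j 0]; exact h2
        · rintro rfl
          exact ⟨fun j => ⟨hnN, le_rfl⟩, rfl⟩
      rw [hset, Finset.sum_singleton]
      have hN : N - 1 + 1 = N := by omega
      simp [hN]
    · -- inductive step
      set M := N - n with hM
      have hM1 : 1 ≤ M := by omega
      have hinj' : Function.Injective (fun i : Fin n => y (Fin.castSucc i)) :=
        fun a b h => Fin.castSucc_injective n (hinj h)
      have hy0' : ∀ i : Fin n, y (Fin.castSucc i) ≠ 0 := fun i => hy0 _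
      have hne : ∀ i : Fin n, y (Fin.castSucc i) - y (Fin.last n) ≠ 0 := fun i =>
        sub_ne_zero.mpr (fun h => (Fin.castSucc_lt_last i).ne (hinj h))
      have hPne : ∀ i : Fin n,
          (∏ k ∈ univ.erase i, (y (Fin.castSucc i) - y (Fin.castSucc k))) ≠ 0 := by
        intro i
        rw [Finset.prod_ne_zero_iff]
        intro k hk
        exact sub_ne_zero.mpr fun h => (Finset.mem_erase.mp hk).1.symm (hinj' h)
      have hQne : (∏ k : Fin n, (y (Fin.last n) - y (Fin.castSucc k))) ≠ 0 := by
        rw [Finset.prod_ne_zero_iff]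
        exact fun k _ => sub_ne_zero.mpr fun h => (Fin.castSucc_lt_last k).ne' (hinj h)
      -- key partial fraction identity
      have hkey : ∑ i : Fin n, ((y (Fin.castSucc i) - y (Fin.last n)) *
            ∏ k ∈ univ.erase i, (y (Fin.castSucc i) - y (Fin.castSucc k)))⁻¹
          = -(∏ k : Fin n, (y (Fin.last n) - y (Fin.castSucc k)))⁻¹ := by
        have hk := key_pf (n := n + 1) (by omega) y hinj
        rw [Fin.sum_univ_castSucc] at hk
        simp_rw [prod_erase_cs (fun k => y (Fin.castSucc _) - y k)] at hk
        rw [prod_erase_last (fun k => y (Fin.last n) - y k)] at hk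
        linear_combination hk
      -- rewrite RHS via composition recurrence
      have hc := comp_rec n N hn (by omega) (fun j m => 1 / y j ^ m)
      have hsgn : (-1 : ℂ) ^ (n + 1 - 1) * (-1 : ℂ) ^ (n - 1) = -1 := by
        have h : (n + 1 - 1) + (n - 1) = 2 * (n - 1) + 1 := by omega
        rw [← pow_add, h, pow_succ, pow_mul]
        simp
      have hsq : ((-1 : ℂ) ^ (n - 1)) * ((-1 : ℂ) ^ (n - 1)) = 1 := by
        rw [← pow_add]
        exact Even.neg_one_pow ⟨n - 1, by ring⟩
      -- inner sums via induction hypothesis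
      have hstep1 : ∀ t ∈ Finset.Icc 1 (N - n),
          1 / y (Fin.last n) ^ t *
            ∑ m ∈ (Fintype.piFinset fun _ : Fin n => Finset.Icc 1 (N - t)).filter
                (fun m => ∑ j, m j = N - t),
              ∏ j : Fin n, 1 / y (Fin.castSucc j) ^ (m j)
          = (-1 : ℂ) ^ (n - 1) * (1 / y (Fin.last n) ^ t *
              ∑ j : Fin n, 1 / (y (Fin.castSucc j) ^ (N - n + 1 - t) *
                ∏ k ∈ univ.erase j, (y (Fin.castSucc j) - y (Fin.castSucc k)))) := by
        intro t ht
        simp only [Finset.mem_Icc] at ht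
        have h1 := IH hn (N - t) (by omega) (fun i => y (Fin.castSucc i)) hy0' hinj'
        have hexp : N - t - n + 1 = N - n + 1 - t := by omega
        rw [hexp] at h1
        exact sign_shuffle _ _ _ _ h1 hsq
      have hstep2 : (-1 : ℂ) ^ (n + 1 - 1) *
            ∑ t ∈ Finset.Icc 1 (N - n), 1 / y (Fin.last n) ^ t *
              ∑ m ∈ (Fintype.piFinset fun _ : Fin n => Finset.Icc 1 (N - t)).filter
                  (fun m => ∑ j, m j = N - t),
                ∏ j : Fin n, 1 / y (Fin.castSucc j) ^ (m j)
          = -∑ t ∈ Finset.Icc 1 (N - n), 1 / y (Fin.last n) ^ t *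
              ∑ j : Fin n, 1 / (y (Fin.castSucc j) ^ (N - n + 1 - t) *
                ∏ k ∈ univ.erase j, (y (Fin.castSucc j) - y (Fin.castSucc k))) := by
        rw [Finset.sum_congr rfl hstep1, ← Finset.mul_sum, ← mul_assoc, hsgn, neg_one_mul]
      have hswap : ∑ t ∈ Finset.Icc 1 (N - n), 1 / y (Fin.last n) ^ t *
              ∑ j : Fin n, 1 / (y (Fin.castSucc j) ^ (N - n + 1 - t) *
                ∏ k ∈ univ.erase j, (y (Fin.castSucc j) - y (Fin.castSucc k)))
          = ∑ j : Fin n, ∑ t ∈ Finset.Icc 1 (N - n), 1 / y (Fin.last n) ^ t *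
              (1 / (y (Fin.castSucc j) ^ (N - n + 1 - t) *
                ∏ k ∈ univ.erase j, (y (Fin.castSucc j) - y (Fin.castSucc k)))) := by
        simp_rw [Finset.mul_sum]
        exact Finset.sum_comm
      have hgeom : ∀ j : Fin n,
          ∑ t ∈ Finset.Icc 1 (N - n), 1 / y (Fin.last n) ^ t *
              (1 / (y (Fin.castSucc j) ^ (N - n + 1 - t) *
                ∏ k ∈ univ.erase j, (y (Fin.castSucc j) - y (Fin.castSucc k))))
          = ((y (Fin.last n))⁻¹ ^ (N - n) - (y (Fin.castSucc j))⁻¹ ^ (N - n)) /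
              (y (Fin.castSucc j) - y (Fin.last n)) *
              (∏ k ∈ univ.erase j, (y (Fin.castSucc j) - y (Fin.castSucc k)))⁻¹ := by
        intro j
        have hg := geom_aux (y (Fin.last n)) (y (Fin.castSucc j)) (hy0 _) (hy0' j) (N - n)
        have h2 : ∑ t ∈ Finset.Icc 1 (N - n),
              (y (Fin.last n))⁻¹ ^ t * (y (Fin.castSucc j))⁻¹ ^ (N - n + 1 - t)
            = ((y (Fin.last n))⁻¹ ^ (N - n) - (y (Fin.castSucc j))⁻¹ ^ (N - n)) /
              (y (Fin.castSucc j) - y (Fin.last n)) :=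
          eq_div_of_mul_eq (hne j) (by linear_combination hg)
        calc ∑ t ∈ Finset.Icc 1 (N - n), 1 / y (Fin.last n) ^ t *
              (1 / (y (Fin.castSucc j) ^ (N - n + 1 - t) *
                ∏ k ∈ univ.erase j, (y (Fin.castSucc j) - y (Fin.castSucc k))))
            = (∑ t ∈ Finset.Icc 1 (N - n),
                (y (Fin.last n))⁻¹ ^ t * (y (Fin.castSucc j))⁻¹ ^ (N - n + 1 - t)) *
                (∏ k ∈ univ.erase j, (y (Fin.castSucc j) - y (Fin.castSucc k)))⁻¹ := by
              rw [Finset.sum_mul]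
              refine Finset.sum_congr rfl fun t _ => ?_
              rw [one_div, one_div, mul_inv, inv_pow, inv_pow]
              ring
          _ = _ := by rw [h2]
      have hLHS : ∑ j : Fin (n+1), 1 / (y j ^ (N - (n+1) + 1) * ∏ k ∈ univ.erase j, (y j - y k))
          = (∑ j : Fin n, 1 / (y (Fin.castSucc j) ^ (N - n) *
              ((y (Fin.castSucc j) - y (Fin.last n)) *
                ∏ k ∈ univ.erase j, (y (Fin.castSucc j) - y (Fin.castSucc k)))))
            + 1 / (y (Fin.last n) ^ (N - n) *
                ∏ k : Fin n, (y (Fin.last n) - y (Fin.castSucc k))) := by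
        have hexp0 : N - (n + 1) + 1 = N - n := by omega
        simp only [hexp0]
        rw [Fin.sum_univ_castSucc]
        congr 1
        · refine Finset.sum_congr rfl fun j _ => ?_
          rw [prod_erase_cs (fun k => y (Fin.castSucc j) - y k)]
        · rw [prod_erase_last (fun k => y (Fin.last n) - y k)]
      have hterm : ∀ j : Fin n,
          ((y (Fin.last n))⁻¹ ^ (N - n) - (y (Fin.castSucc j))⁻¹ ^ (N - n)) /
              (y (Fin.castSucc j) - y (Fin.last n)) *
              (∏ k ∈ univ.erase j, (y (Fin.castSucc j) - y (Fin.castSucc k)))⁻¹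
          = (y (Fin.last n))⁻¹ ^ (N - n) * ((y (Fin.castSucc j) - y (Fin.last n)) *
                ∏ k ∈ univ.erase j, (y (Fin.castSucc j) - y (Fin.castSucc k)))⁻¹
            - 1 / (y (Fin.castSucc j) ^ (N - n) *
                ((y (Fin.castSucc j) - y (Fin.last n)) *
                  ∏ k ∈ univ.erase j, (y (Fin.castSucc j) - y (Fin.castSucc k)))) := by
        intro j
        simp only [one_div, mul_inv, div_eq_mul_inv, ← inv_pow]
        ring
      rw [hLHS, hc, hstep2, hswap, Finset.sum_congr rfl (fun j _ => hgeom j),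
        Finset.sum_congr rfl (fun j _ => hterm j), Finset.sum_sub_distrib, ← Finset.mul_sum,
        hkey]
      simp only [one_div, mul_inv, ← inv_pow]
      ring

/-- Symmetrization identity: for distinct nonzero complex numbers `y 0, …, y (n-1)`
and `n ≤ N`,
`∑ j, 1/(y j ^ (N - n + 1) · ∏_{k ≠ j} (y j - y k))
  = (-1)^(n-1) · ∑_{m ∈ ℤ_{>0}^n, ∑ m = N} ∏ j, 1 / y j ^ (m j)`. -/
theorem symmetrization_identity (n N : ℕ) (hn : 1 ≤ n) (hnN : n ≤ N)
    (y : Fin n → ℂ) (hy0 : ∀ j, y j ≠ 0) (hinj : Function.Injective y) :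
    ∑ j : Fin n, 1 / (y j ^ (N - n + 1) * ∏ k ∈ Finset.univ.erase j, (y j - y k))
      = (-1 : ℂ) ^ (n - 1) *
        ∑ m ∈ (Fintype.piFinset fun _ : Fin n => Finset.Icc 1 N).filter
            (fun m => ∑ j, m j = N),
          ∏ j : Fin n, 1 / y j ^ (m j) := by
  exact aux_main n hn N hnN y hy0 hinj
end

section
/- The Fourier transform of the indicator function of the standard simplex at y = (y_1,…,y_d) with all coordinates nonzero and pairwise distinct decomposes as X(y) = X_1(y) + X_2(y), where X_1(y) = (−1/(2πi))^d / (y_1⋯y_d) and X_2(y) = (1/(2πi))^d ∑_{j=1}^{d} e^{2πi y_j}/(y_j ∏_{l≠j}(y_j − y_l)); that is, ∫_{Δ_d} e^{2πi⟨y,x⟩} dx = (−1/(2πi))^d · 1/(y_1⋯y_d) + (1/(2πi))^d ∑_{j=1}^d e^{2πi y_j}/(y_j ∏_{l≠j}(y_j − y_l)). -/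
open Finset MeasureTheory Real Complex

lemma pf_aux (S : Finset ℂ) : (0:ℂ) ∉ S → ∀ z : ℂ, z ≠ 0 → z ∉ S →
    (-1:ℂ)^S.card / (z * ∏ a ∈ S, a)
      + ∑ a ∈ S, 1 / (a * (∏ b ∈ S.erase a, (a - b)) * (z - a))
    = 1 / (z * ∏ a ∈ S, (z - a)) := by
  induction S using Finset.induction_on with
  | empty => intro _ z hz _; simp
  | insert w S hw IH =>
    intro h0 z hz0 hzS
    have hw0 : w ≠ 0 := fun h => h0 (by simp [h])
    have h0S : (0:ℂ) ∉ S := fun h => h0 (Finset.mem_insert_of_mem h)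
    have hzw : z ≠ w := fun h => hzS (by simp [h])
    have hzS' : z ∉ S := fun h => hzS (Finset.mem_insert_of_mem h)
    have hwS : w ∉ S := hw
    have IHz := IH h0S z hz0 hzS'
    have IHw := IH h0S w hw0 hwS
    have h4 : z - w ≠ 0 := sub_ne_zero.2 hzw
    rw [Finset.sum_insert hwS, Finset.prod_insert hwS, Finset.prod_insert hwS,
      Finset.erase_insert hwS, Finset.card_insert_of_notMem hwS, pow_succ]
    have hsum : ∑ a ∈ S, 1 / (a * (∏ b ∈ (insert w S).erase a, (a - b)) * (z - a))
        = ((∑ a ∈ S, 1 / (a * (∏ b ∈ S.erase a, (a - b)) * (z - a)))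
          - (∑ a ∈ S, 1 / (a * (∏ b ∈ S.erase a, (a - b)) * (w - a)))) * (z - w)⁻¹ := by
      rw [← Finset.sum_sub_distrib, Finset.sum_mul]
      refine Finset.sum_congr rfl (fun a ha => ?_)
      have haw : a ≠ w := fun h => hwS (h ▸ ha)
      have hza : z ≠ a := fun h => hzS' (h ▸ ha)
      rw [Finset.erase_insert_of_ne haw.symm,
        Finset.prod_insert (fun h => hwS (Finset.mem_of_mem_erase h))]
      set R := ∏ b ∈ S.erase a, (a - b) with hRdef
      have h2 : z - a ≠ 0 := sub_ne_zero.2 hza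
      have h3 : w - a ≠ 0 := sub_ne_zero.2 haw.symm
      have hA : (z - a)⁻¹ - (w - a)⁻¹ = (w - z) * ((z - a)⁻¹ * (w - a)⁻¹) := by
        rw [inv_sub_inv h2 h3, div_eq_mul_inv, mul_inv]; ring
      have hB : (z - w) * (z - w)⁻¹ = 1 := mul_inv_cancel₀ h4
      have hC : (a - w)⁻¹ = -((w - a)⁻¹) := by
        rw [show a - w = -(w - a) by ring, inv_neg]
      simp only [one_div, mul_inv]
      linear_combination (-(a⁻¹ * R⁻¹ * (z - w)⁻¹)) * hA
        + (a⁻¹ * R⁻¹ * (z - a)⁻¹ * (w - a)⁻¹) * hB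
        + (a⁻¹ * R⁻¹ * (z - a)⁻¹) * hC
    rw [hsum]
    have e1 : ∑ a ∈ S, 1 / (a * (∏ b ∈ S.erase a, (a - b)) * (z - a))
        = 1 / (z * ∏ a ∈ S, (z - a)) - (-1:ℂ)^S.card / (z * ∏ a ∈ S, a) := by
      linear_combination IHz
    have e2 : ∑ a ∈ S, 1 / (a * (∏ b ∈ S.erase a, (a - b)) * (w - a))
        = 1 / (w * ∏ a ∈ S, (w - a)) - (-1:ℂ)^S.card / (w * ∏ a ∈ S, a) := by
      linear_combination IHw
    rw [e1, e2]
    set P := ∏ a ∈ S, a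
    set Qz := ∏ a ∈ S, (z - a) with hQzdef
    set Qw := ∏ a ∈ S, (w - a) with hQwdef
    have hA : w⁻¹ - z⁻¹ = (z - w) * (w⁻¹ * z⁻¹) := by
      rw [inv_sub_inv hw0 hz0, div_eq_mul_inv, mul_inv]
    have hB : (z - w) * (z - w)⁻¹ = 1 := mul_inv_cancel₀ h4
    simp only [one_div, mul_inv, div_eq_mul_inv]
    linear_combination ((-1:ℂ)^S.card * P⁻¹ * (z - w)⁻¹) * hA
      + ((-1:ℂ)^S.card * P⁻¹ * w⁻¹ * z⁻¹) * hB

lemma measurableSet_simplex (d : ℕ) (c : ℝ) :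
    MeasurableSet {x : Fin d → ℝ | (∀ j, 0 < x j) ∧ ∑ j, x j < c} := by
  have h : {x : Fin d → ℝ | (∀ j, 0 < x j) ∧ ∑ j, x j < c}
      = (⋂ j, {x : Fin d → ℝ | 0 < x j}) ∩ {x | ∑ j, x j < c} := by
    ext x
    simp only [Set.mem_setOf_eq, Set.mem_inter_iff, Set.mem_iInter]
  rw [h]
  exact (MeasurableSet.iInter fun j =>
      measurableSet_lt measurable_const (measurable_pi_apply j)).inter
    (measurableSet_lt (Finset.measurable_sum _ fun j _ => measurable_pi_apply j) measurable_const)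

lemma interval_exp_sum_integral (t : ℝ) (s0 : ℂ) (hs0 : s0 ≠ 0) (S' : Finset ℂ)
    (hS'0 : ∀ b ∈ S', s0 - b ≠ 0) (C : ℂ) (c : ℂ → ℂ) :
    (∫ a in (0:ℝ)..t, Complex.exp (s0 * a) * (C + ∑ b ∈ S', Complex.exp ((↑(t - a)) * b) * c b))
    = C * ((Complex.exp (s0 * t) - 1) / s0)
      + ∑ b ∈ S', (Complex.exp ((t:ℂ) * b) * c b) * ((Complex.exp ((s0 - b) * t) - 1) / (s0 - b)) := by
  have hpt : ∀ a : ℝ, Complex.exp (s0 * a) * (C + ∑ b ∈ S', Complex.exp ((↑(t - a)) * b) * c b)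
      = C * Complex.exp (s0 * a)
        + ∑ b ∈ S', (Complex.exp ((t:ℂ) * b) * c b) * Complex.exp ((s0 - b) * a) := by
    intro a
    rw [mul_add, Finset.mul_sum, mul_comm]
    congr 1
    refine Finset.sum_congr rfl fun b _ => ?_
    have h : Complex.exp (s0 * a) * Complex.exp ((↑(t - a)) * b)
        = Complex.exp ((t:ℂ) * b) * Complex.exp ((s0 - b) * a) := by
      rw [← Complex.exp_add, ← Complex.exp_add]
      congr 1
      push_cast
      ring
    rw [← mul_assoc, h]; ring
  simp only [hpt]
  rw [intervalIntegral.integral_add]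
  · rw [intervalIntegral.integral_const_mul, intervalIntegral.integral_finset_sum]
    · rw [integral_exp_mul_complex hs0]
      congr 1
      · norm_num
      · refine Finset.sum_congr rfl fun b hb => ?_
        rw [intervalIntegral.integral_const_mul, integral_exp_mul_complex (hS'0 b hb)]
        norm_num
    · intro b hb
      apply Continuous.intervalIntegrable
      fun_prop
  · apply Continuous.intervalIntegrable
    fun_prop
  · apply Continuous.intervalIntegrable
    exact continuous_finset_sum _ fun b _ => by fun_prop

lemma final_algebra (S' : Finset ℂ) (h0 : (0:ℂ) ∉ S') (s0 : ℂ) (hs0 : s0 ≠ 0)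
    (hs0S : s0 ∉ S') (t : ℝ) :
    (-1:ℂ)^S'.card / (∏ a ∈ S', a) * ((Complex.exp (s0 * t) - 1) / s0)
      + ∑ b ∈ S', (Complex.exp ((t:ℂ) * b) * (1 / (b * ∏ b' ∈ S'.erase b, (b - b'))))
          * ((Complex.exp ((s0 - b) * t) - 1) / (s0 - b))
    = (-1:ℂ)^(S'.card+1) / (s0 * ∏ a ∈ S', a)
      + (Complex.exp ((t:ℂ) * s0) / (s0 * ∏ b ∈ S', (s0 - b))
        + ∑ b ∈ S', Complex.exp ((t:ℂ) * b) / (b * ((b - s0) * ∏ b' ∈ S'.erase b, (b - b')))) := by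
  have hpf := pf_aux S' h0 s0 hs0 hs0S
  have hterm : ∀ b ∈ S', (Complex.exp ((t:ℂ) * b) * (1 / (b * ∏ b' ∈ S'.erase b, (b - b'))))
          * ((Complex.exp ((s0 - b) * t) - 1) / (s0 - b))
      = Complex.exp ((t:ℂ) * s0) * (1 / (b * (∏ b' ∈ S'.erase b, (b - b')) * (s0 - b)))
        - Complex.exp ((t:ℂ) * b) * (1 / (b * (∏ b' ∈ S'.erase b, (b - b')) * (s0 - b))) := by
    intro b hb
    have hE : Complex.exp ((t:ℂ) * b) * Complex.exp ((s0 - b) * t) = Complex.exp ((t:ℂ) * s0) := by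
      rw [← Complex.exp_add]; congr 1; ring
    simp only [one_div, mul_inv]
    linear_combination (b⁻¹ * (∏ b' ∈ S'.erase b, (b - b'))⁻¹ * (s0 - b)⁻¹) * hE
  have hterm2 : ∀ b ∈ S', Complex.exp ((t:ℂ) * b) / (b * ((b - s0) * ∏ b' ∈ S'.erase b, (b - b')))
      = -(Complex.exp ((t:ℂ) * b) * (1 / (b * (∏ b' ∈ S'.erase b, (b - b')) * (s0 - b)))) := by
    intro b hb
    rw [show b * ((b - s0) * ∏ b' ∈ S'.erase b, (b - b'))
        = -(b * (∏ b' ∈ S'.erase b, (b - b')) * (s0 - b)) by ring, div_neg, mul_one_div]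
  rw [Finset.sum_congr rfl hterm, Finset.sum_congr rfl hterm2, Finset.sum_sub_distrib,
    ← Finset.mul_sum, Finset.sum_neg_distrib]
  have hF : Complex.exp (s0 * (t:ℂ)) = Complex.exp ((t:ℂ) * s0) := by rw [mul_comm]
  linear_combination (Complex.exp ((t:ℂ) * s0)) * hpf
    + ((-1:ℂ)^S'.card * (∏ a ∈ S', a)⁻¹ * s0⁻¹) * hF

lemma simplex_integral (d : ℕ) : ∀ (s : Fin d → ℂ), (∀ j, s j ≠ 0) → Function.Injective s →
    ∀ t : ℝ, 0 < t →
    (∫ x in {x : Fin d → ℝ | (∀ j, 0 < x j) ∧ ∑ j, x j < t},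
        Complex.exp (∑ j, s j * (x j : ℂ)))
    = (-1:ℂ)^d / (∏ a ∈ Finset.image s Finset.univ, a)
      + ∑ a ∈ Finset.image s Finset.univ,
          Complex.exp ((t : ℂ) * a) / (a * ∏ b ∈ (Finset.image s Finset.univ).erase a, (a - b)) := by
  induction d with
  | zero =>
    intro s hs0 hsinj t ht
    have hset : {x : Fin 0 → ℝ | (∀ j, 0 < x j) ∧ ∑ j, x j < t} = Set.univ := by
      ext x; simp [ht]
    rw [hset]
    simp [MeasureTheory.integral_const]
    rw [show (volume : Measure (Fin 0 → ℝ)).real Set.univ = 1 by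
      rw [MeasureTheory.measureReal_def, MeasureTheory.volume_pi, MeasureTheory.Measure.pi_univ]; simp]
  | succ d IH =>
    intro s hs0 hsinj t ht
    set s0 : ℂ := s 0 with hs0def
    set s' : Fin d → ℂ := fun j => s j.succ with hs'def
    have hs'0 : ∀ j, s' j ≠ 0 := fun j => hs0 j.succ
    have hs'inj : Function.Injective s' := fun i j h => by
      have := hsinj h
      exact Fin.succ_injective d this
    set S' : Finset ℂ := Finset.image s' Finset.univ with hS'def
    have h0S' : (0:ℂ) ∉ S' := by
      simp only [hS'def, Finset.mem_image]
      rintro ⟨j, -, hj⟩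
      exact hs'0 j hj
    have hs0S' : s0 ∉ S' := by
      simp only [hS'def, Finset.mem_image]
      rintro ⟨j, -, hj⟩
      exact (Fin.succ_ne_zero j) (hsinj hj)
    have hs00 : s0 ≠ 0 := hs0 0
    have hsb : ∀ b ∈ S', s0 - b ≠ 0 := by
      intro b hb
      refine sub_ne_zero.2 fun h => hs0S' (h ▸ hb)
    have hcard : S'.card = d := by
      rw [hS'def, Finset.card_image_of_injective _ hs'inj, Finset.card_univ, Fintype.card_fin]
    set G : ℝ × (Fin d → ℝ) → ℂ :=
      fun p => Complex.exp (s0 * (p.1 : ℂ) + ∑ j, s' j * (p.2 j : ℂ)) with hGdef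
    set T : Set (ℝ × (Fin d → ℝ)) :=
      {p | p.1 ∈ Set.Ioo 0 t ∧ ((∀ j, 0 < p.2 j) ∧ ∑ j, p.2 j < t - p.1)} with hTdef
    have hTm : MeasurableSet T := by
      have h : T = ({p : ℝ × (Fin d → ℝ) | 0 < p.1} ∩ {p | p.1 < t}) ∩
          ((⋂ j, {p : ℝ × (Fin d → ℝ) | 0 < p.2 j}) ∩
            {p : ℝ × (Fin d → ℝ) | ∑ j, p.2 j < t - p.1}) := by
        ext p
        simp only [hTdef, Set.mem_setOf_eq, Set.mem_inter_iff, Set.mem_iInter, Set.mem_Ioo]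
      rw [h]
      refine ((measurableSet_lt measurable_const measurable_fst).inter
        (measurableSet_lt measurable_fst measurable_const)).inter (MeasurableSet.inter ?_ ?_)
      · exact MeasurableSet.iInter fun j =>
          measurableSet_lt measurable_const
            (show Measurable fun p : ℝ × (Fin d → ℝ) => p.2 j by fun_prop)
      · exact measurableSet_lt
          (show Measurable fun p : ℝ × (Fin d → ℝ) => ∑ j, p.2 j by fun_prop)
          (show Measurable fun p : ℝ × (Fin d → ℝ) => t - p.1 by fun_prop)
    -- Step 1: transport to product space
    have hmp := (MeasureTheory.volume_preserving_piFinSuccAbove (fun _ : Fin (d+1) => ℝ) 0).symm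
    have hemb := (MeasurableEquiv.piFinSuccAbove (fun _ : Fin (d+1) => ℝ) 0).symm.measurableEmbedding
    have key := hmp.setIntegral_preimage_emb hemb
      (fun x => Complex.exp (∑ j, s j * (x j : ℂ)))
      {x : Fin (d+1) → ℝ | (∀ j, 0 < x j) ∧ ∑ j, x j < t}
    rw [← key]
    have hg : ∀ (p : ℝ × (Fin d → ℝ)),
        (MeasurableEquiv.piFinSuccAbove (fun _ : Fin (d+1) => ℝ) 0).symm p = Fin.cons p.1 p.2 := by
      intro p
      ext j
      induction j using Fin.cases with
      | zero => simp [MeasurableEquiv.piFinSuccAbove]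
      | succ i => simp [MeasurableEquiv.piFinSuccAbove]
    have hpre : (MeasurableEquiv.piFinSuccAbove (fun _ : Fin (d+1) => ℝ) 0).symm ⁻¹'
          {x : Fin (d+1) → ℝ | (∀ j, 0 < x j) ∧ ∑ j, x j < t}
        = {p : ℝ × (Fin d → ℝ) |
            p.1 ∈ Set.Ioo 0 t ∧ ((∀ j, 0 < p.2 j) ∧ ∑ j, p.2 j < t - p.1)} := by
      ext ⟨a, x⟩
      simp only [Set.mem_preimage, hg, Set.mem_setOf_eq, Fin.forall_fin_succ, Fin.cons_zero,
        Fin.cons_succ, Fin.sum_univ_succ, Set.mem_Ioo]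
      constructor
      · rintro ⟨⟨ha, hx⟩, hsum⟩
        have hxs : 0 ≤ ∑ j, x j := Finset.sum_nonneg fun j _ => (hx j).le
        exact ⟨⟨ha, by linarith⟩, hx, by linarith⟩
      · rintro ⟨⟨ha, hat⟩, hx, hsum⟩
        exact ⟨⟨ha, hx⟩, by linarith⟩
    rw [hpre]
    have hint1 : (∫ p in T,
          Complex.exp (∑ j, s j * ((((MeasurableEquiv.piFinSuccAbove
            (fun _ : Fin (d+1) => ℝ) 0).symm p) j : ℝ) : ℂ)))
        = ∫ p in T, G p := by
      refine MeasureTheory.setIntegral_congr_fun hTm ?_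
      intro p hp
      simp only [hg, Fin.sum_univ_succ, Fin.cons_zero, Fin.cons_succ]
      rfl
    rw [hint1]
    -- Step 2: Fubini
    have hGc : Continuous G := by
      apply Complex.continuous_exp.comp
      fun_prop
    have hTsub : T ⊆ Set.Icc ((0:ℝ), (0 : Fin d → ℝ)) (t, fun _ => t) := by
      rintro ⟨a, x⟩ ⟨⟨ha, hat⟩, hx, hsum⟩
      have hxs : ∀ j, x j ≤ ∑ l, x l := fun j =>
        Finset.single_le_sum (fun l _ => (hx l).le) (Finset.mem_univ j)
      constructor
      · exact ⟨ha.le, fun j => (hx j).le⟩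
      · exact ⟨hat.le, fun j => by have := hxs j; simp only; linarith⟩
    have hInt : IntegrableOn G T := by
      refine (hGc.continuousOn.integrableOn_compact isCompact_Icc).mono_set hTsub
    have hInd : Integrable (Function.uncurry fun a x => T.indicator G (a, x))
        ((volume : Measure ℝ).prod volume) := hInt.integrable_indicator hTm
    have hfub : (∫ p in T, G p)
        = ∫ a in Set.Ioo 0 t,
            ∫ x in {x : Fin d → ℝ | (∀ j, 0 < x j) ∧ ∑ j, x j < t - a}, G (a, x) := by
      calc ∫ p in T, G p = ∫ p, T.indicator G p := (integral_indicator hTm).symm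
        _ = ∫ p, T.indicator G p ∂((volume : Measure ℝ).prod volume) := rfl
        _ = ∫ a, ∫ x, T.indicator G (a, x) :=
            (MeasureTheory.integral_integral hInd).symm
        _ = ∫ a, Set.indicator (Set.Ioo 0 t)
              (fun a => ∫ x in {x : Fin d → ℝ | (∀ j, 0 < x j) ∧ ∑ j, x j < t - a}, G (a, x)) a := by
            congr 1
            funext a
            by_cases ha : a ∈ Set.Ioo 0 t
            · rw [Set.indicator_of_mem ha, ← integral_indicator (measurableSet_simplex d (t - a))]
              congr 1
              funext x
              simp only [Set.indicator_apply, hTdef, Set.mem_setOf_eq, ha, true_and]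
            · rw [Set.indicator_of_notMem ha]
              have h0 : ∀ x : Fin d → ℝ, T.indicator G (a, x) = 0 := fun x =>
                Set.indicator_of_notMem (fun hp => ha hp.1) _
              simp only [h0, integral_zero]
        _ = ∫ a in Set.Ioo 0 t,
              ∫ x in {x : Fin d → ℝ | (∀ j, 0 < x j) ∧ ∑ j, x j < t - a}, G (a, x) :=
            integral_indicator measurableSet_Ioo
    rw [hfub]
    -- Step 3: apply IH to the inner integral
    have hinner : ∀ a ∈ Set.Ioo (0:ℝ) t,
        (∫ x in {x : Fin d → ℝ | (∀ j, 0 < x j) ∧ ∑ j, x j < t - a}, G (a, x))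
        = Complex.exp (s0 * (a:ℂ)) * ((-1:ℂ)^d / (∏ b ∈ S', b)
            + ∑ b ∈ S', Complex.exp ((↑(t - a)) * b) * (1 / (b * ∏ b' ∈ S'.erase b, (b - b')))) := by
      intro a ha
      have hta : 0 < t - a := by have := ha.2; simp only [Set.mem_Ioo] at ha; linarith
      have hsplit : ∀ x : Fin d → ℝ, G (a, x)
          = Complex.exp (s0 * (a:ℂ)) * Complex.exp (∑ j, s' j * (x j : ℂ)) := by
        intro x
        rw [hGdef, ← Complex.exp_add]
      simp only [hsplit]
      rw [MeasureTheory.integral_const_mul, IH s' hs'0 hs'inj (t - a) hta]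
      congr 1
      congr 1
      refine Finset.sum_congr rfl fun b hb => ?_
      rw [mul_one_div]
    rw [MeasureTheory.setIntegral_congr_fun measurableSet_Ioo hinner]
    -- Step 4: compute the 1-dimensional integral
    rw [← MeasureTheory.integral_Ioc_eq_integral_Ioo, ← intervalIntegral.integral_of_le ht.le]
    rw [interval_exp_sum_integral t s0 hs00 S' hsb
      ((-1:ℂ)^d / (∏ b ∈ S', b)) (fun b => 1 / (b * ∏ b' ∈ S'.erase b, (b - b')))]
    -- Step 5: final algebra
    have hS : Finset.image s Finset.univ = insert s0 S' := by
      ext z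
      simp only [Finset.mem_image, Finset.mem_insert, hS'def, hs'def, hs0def]
      constructor
      · rintro ⟨j, -, hj⟩
        induction j using Fin.cases with
        | zero => exact Or.inl hj.symm
        | succ i => exact Or.inr ⟨i, Finset.mem_univ i, hj⟩
      · rintro (h | ⟨i, -, hi⟩)
        · exact ⟨0, Finset.mem_univ 0, h.symm⟩
        · exact ⟨i.succ, Finset.mem_univ _, hi⟩
    rw [hS, Finset.sum_insert hs0S', Finset.prod_insert hs0S', Finset.erase_insert hs0S']
    have hsum2 : ∀ b ∈ S', Complex.exp ((t:ℂ) * b)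
          / (b * ∏ b' ∈ (insert s0 S').erase b, (b - b'))
        = Complex.exp ((t:ℂ) * b) / (b * ((b - s0) * ∏ b' ∈ S'.erase b, (b - b'))) := by
      intro b hb
      have hbs0 : b ≠ s0 := fun h => hs0S' (h ▸ hb)
      rw [Finset.erase_insert_of_ne hbs0.symm,
        Finset.prod_insert (fun h => hs0S' (Finset.mem_of_mem_erase h))]
    rw [Finset.sum_congr rfl hsum2]
    have := final_algebra S' h0S' s0 hs00 hs0S' t
    rw [hcard] at this
    linear_combination this

/-- Decomposition of the Fourier transform of the standard simplex:
`∫_{Δ_d} e^{2πi⟨y,x⟩} dx = (−1/(2πi))^d / (y_1⋯y_d)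
  + (1/(2πi))^d ∑_j e^{2πi y_j}/(y_j ∏_{l≠j}(y_j − y_l))`. -/
theorem fourier_transform_simplex_decomposition (d : ℕ) (y : Fin d → ℝ)
    (hy0 : ∀ j, y j ≠ 0) (hinj : Function.Injective y) :
    ∫ x in {x : Fin d → ℝ | (∀ j, 0 < x j) ∧ ∑ j, x j < 1},
        Complex.exp (2 * Real.pi * Complex.I * ∑ j, (y j : ℂ) * (x j : ℂ))
      = (-(1 / (2 * Real.pi * Complex.I))) ^ d * (1 / ∏ j : Fin d, (y j : ℂ))
        + (1 / (2 * Real.pi * Complex.I)) ^ d *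
            ∑ j : Fin d,
              Complex.exp (2 * Real.pi * Complex.I * (y j : ℂ)) /
                ((y j : ℂ) * ∏ l ∈ Finset.univ.erase j, ((y j : ℂ) - (y l : ℂ))) := by
  have hpi : (2 : ℂ) * Real.pi * Complex.I ≠ 0 := by
    refine mul_ne_zero (mul_ne_zero two_ne_zero ?_) Complex.I_ne_zero
    exact_mod_cast Complex.ofReal_ne_zero.2 Real.pi_ne_zero
  generalize hcdef : (2 : ℂ) * Real.pi * Complex.I = c
  have hc : c ≠ 0 := hcdef ▸ hpi
  set s : Fin d → ℂ := fun j => c * (y j : ℂ) with hsdef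
  have hs0 : ∀ j, s j ≠ 0 := fun j =>
    mul_ne_zero hc (Complex.ofReal_ne_zero.2 (hy0 j))
  have hsinj : Function.Injective s := by
    intro i j h
    have h2 : (y i : ℂ) = (y j : ℂ) := mul_left_cancel₀ hc h
    exact hinj (by exact_mod_cast h2)
  have hintg : ∀ x : Fin d → ℝ,
      Complex.exp (c * ∑ j, (y j : ℂ) * (x j : ℂ))
      = Complex.exp (∑ j, s j * (x j : ℂ)) := by
    intro x
    congr 1
    rw [Finset.mul_sum]
    exact Finset.sum_congr rfl fun j _ => by simp only [hsdef]; ring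
  simp only [hintg]
  rw [simplex_integral d s hs0 hsinj 1 one_pos]
  have hprod : ∏ a ∈ Finset.image s Finset.univ, a = c^d * ∏ j : Fin d, (y j : ℂ) := by
    rw [Finset.prod_image (fun i _ j _ h => hsinj h), hsdef]
    rw [Finset.prod_mul_distrib, Finset.prod_const, Finset.card_univ, Fintype.card_fin]
  have hsum : ∑ a ∈ Finset.image s Finset.univ,
        Complex.exp (((1:ℝ) : ℂ) * a) / (a * ∏ b ∈ (Finset.image s Finset.univ).erase a, (a - b))
      = (1 / c) ^ d * ∑ j : Fin d,
          Complex.exp (c * (y j : ℂ)) /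
            ((y j : ℂ) * ∏ l ∈ Finset.univ.erase j, ((y j : ℂ) - (y l : ℂ))) := by
    rw [Finset.sum_image (fun i _ j _ h => hsinj h), Finset.mul_sum]
    refine Finset.sum_congr rfl fun j _ => ?_
    have hd0 : 0 < d := j.pos
    rw [← Finset.image_erase hsinj]
    rw [Finset.prod_image (fun i _ l _ h => hsinj h)]
    have hfac : ∏ l ∈ Finset.univ.erase j, (s j - s l)
        = c ^ (d - 1) * ∏ l ∈ Finset.univ.erase j, ((y j : ℂ) - (y l : ℂ)) := by
      calc ∏ l ∈ Finset.univ.erase j, (s j - s l)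
          = ∏ l ∈ Finset.univ.erase j, (c * ((y j : ℂ) - (y l : ℂ))) := by
            refine Finset.prod_congr rfl fun l _ => ?_
            rw [hsdef, mul_sub]
        _ = c ^ (Finset.univ.erase j).card
            * ∏ l ∈ Finset.univ.erase j, ((y j : ℂ) - (y l : ℂ)) := by
            rw [Finset.prod_mul_distrib, Finset.prod_const]
        _ = c ^ (d - 1) * ∏ l ∈ Finset.univ.erase j, ((y j : ℂ) - (y l : ℂ)) := by
            rw [Finset.card_erase_of_mem (Finset.mem_univ j), Finset.card_univ, Fintype.card_fin]
    rw [hfac]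
    have hE : Complex.exp (((1:ℝ) : ℂ) * s j) = Complex.exp (c * (y j : ℂ)) := by
      simp only [hsdef]
      norm_num
    rw [hE]
    have hcc : c * c ^ (d - 1) = c ^ d := by
      rw [← pow_succ']
      congr 1
      omega
    rw [show s j * (c ^ (d - 1) * ∏ l ∈ Finset.univ.erase j, ((y j : ℂ) - (y l : ℂ)))
        = c ^ d * ((y j : ℂ) * ∏ l ∈ Finset.univ.erase j, ((y j : ℂ) - (y l : ℂ))) by
      rw [← hcc, hsdef]; ring]
    rw [mul_comm (c^d), ← div_div, div_eq_inv_mul, one_div, inv_pow]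
  rw [hprod, hsum, show (-(1/c))^d = (-1:ℂ)^d * (1/c)^d from neg_pow _ _]
  ring
end

section
/- The multiple Bernoulli polynomial at the half-shift satisfies the parity relation B*_k(−t; w) = (−1)^k B*_k(t; w), where B*_k(t; w) = B_k(t; w, (1/2,…,1/2)). -/
open Finset PowerSeries

private lemma rescale_C' (a r : ℝ) : PowerSeries.rescale a (PowerSeries.C r) = PowerSeries.C r := by
  ext n
  simp only [PowerSeries.coeff_rescale, PowerSeries.coeff_C]
  split_ifs with h
  · subst h; simp
  · exact mul_zero _

private lemma rescale_zero_exp : PowerSeries.rescale (0 : ℝ) (PowerSeries.exp ℝ) = 1 := by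
  rw [PowerSeries.rescale_zero]
  simp [PowerSeries.constantCoeff_exp]

private lemma rescale_exp_ne_zero (a : ℝ) : PowerSeries.rescale a (PowerSeries.exp ℝ) ≠ 0 := by
  intro h
  have h0 := congrArg (PowerSeries.coeff 0) h
  simp [PowerSeries.coeff_rescale, PowerSeries.coeff_zero_eq_constantCoeff,
    PowerSeries.constantCoeff_exp] at h0

/-- Parity of the half-shifted multiple Bernoulli polynomials
`B*_k(t;w) = B_k(t;w,(1/2,…,1/2))`: one has `B*_k(−t;w) = (−1)^k B*_k(t;w)`.
The family `B k t u` of multiple Bernoulli polynomials is defined through the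
generating function `(∏_j w_j s e^{w_j u_j s}/(e^{w_j s} − 1)) e^{st}
= ∑_k B_k(t;w,u) s^k/k!` (stated with denominators cleared, as an identity of
formal power series). -/
theorem multiple_bernoulli_half_parity (d : ℕ) (w : Fin d → ℝ) (hw : ∀ j, w j ≠ 0)
    (B : ℕ → ℝ → (Fin d → ℝ) → ℝ)
    (hB : ∀ (t : ℝ) (u : Fin d → ℝ),
      (PowerSeries.mk fun k => (B k t u / k.factorial : ℝ)) *
          ∏ j : Fin d, (PowerSeries.rescale (w j) (PowerSeries.exp ℝ) - 1)
        = (∏ j : Fin d, (PowerSeries.C (w j) * PowerSeries.X *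
              PowerSeries.rescale (w j * u j) (PowerSeries.exp ℝ)))
            * PowerSeries.rescale t (PowerSeries.exp ℝ)) :
    ∀ (k : ℕ) (t : ℝ),
      B k (-t) (fun _ => (1/2 : ℝ)) = (-1 : ℝ) ^ k * B k t (fun _ => (1/2 : ℝ)) := by
  intro k t
  set u : Fin d → ℝ := fun _ => (1/2 : ℝ) with hu
  set P : PowerSeries ℝ := ∏ j : Fin d, (PowerSeries.rescale (w j) (PowerSeries.exp ℝ) - 1) with hP
  set V : PowerSeries ℝ := ∏ j : Fin d, (-(PowerSeries.rescale (-(w j)) (PowerSeries.exp ℝ))) with hV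
  -- Apply rescale (-1) to hB t u
  have h1 := congrArg (PowerSeries.rescale (-1 : ℝ)) (hB t u)
  rw [map_mul, map_prod, map_mul, map_prod, PowerSeries.rescale_rescale] at h1
  have key : ∀ j : Fin d,
      PowerSeries.rescale (-1 : ℝ) (PowerSeries.rescale (w j) (PowerSeries.exp ℝ) - 1)
        = -(PowerSeries.rescale (-(w j)) (PowerSeries.exp ℝ)) *
            (PowerSeries.rescale (w j) (PowerSeries.exp ℝ) - 1) := by
    intro j
    rw [map_sub, map_one, PowerSeries.rescale_rescale]
    have : PowerSeries.rescale (-(w j)) (PowerSeries.exp ℝ) *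
        PowerSeries.rescale (w j) (PowerSeries.exp ℝ)
          = PowerSeries.rescale (0 : ℝ) (PowerSeries.exp ℝ) := by
      rw [PowerSeries.exp_mul_exp_eq_exp_add]; ring_nf
    have h0 : w j * (-1) = -(w j) := by ring
    have h1 : PowerSeries.rescale (-(w j)) (PowerSeries.exp ℝ) *
        PowerSeries.rescale (w j) (PowerSeries.exp ℝ) = 1 := by
      rw [this, rescale_zero_exp]
    rw [h0]
    linear_combination h1
  have key2 : ∀ j : Fin d,
      PowerSeries.rescale (-1 : ℝ) (PowerSeries.C (w j) * PowerSeries.X *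
          PowerSeries.rescale (w j * u j) (PowerSeries.exp ℝ))
        = -(PowerSeries.rescale (-(w j)) (PowerSeries.exp ℝ)) *
            (PowerSeries.C (w j) * PowerSeries.X *
              PowerSeries.rescale (w j * u j) (PowerSeries.exp ℝ)) := by
    intro j
    rw [map_mul, map_mul, rescale_C', PowerSeries.rescale_neg_one_X,
      PowerSeries.rescale_rescale]
    have : w j * u j * (-1) = -(w j) + w j * u j := by simp [hu]; ring
    rw [this, ← PowerSeries.exp_mul_exp_eq_exp_add]
    ring
  rw [Finset.prod_congr rfl fun j _ => key j,
      Finset.prod_congr rfl fun j _ => key2 j,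
      Finset.prod_mul_distrib, Finset.prod_mul_distrib] at h1
  -- now use hB (-t) u
  have h2 := hB (-t) u
  have ht : t * (-1) = -t := by ring
  rw [ht, ← hV] at h1
  -- h1 : rescale (-1) (mk ...) * (V * P) = V * (∏ ...) * rescale (-t) exp
  -- h2 : mk (B · (-t) u ...) * P = (∏ ...) * rescale (-t) exp
  have h3 : V * (PowerSeries.rescale (-1 : ℝ) (PowerSeries.mk fun k => (B k t u / k.factorial : ℝ)) * P)
      = V * ((PowerSeries.mk fun k => (B k (-t) u / k.factorial : ℝ)) * P) := by
    linear_combination h1 - V * h2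
  have hVne : V ≠ 0 := by
    rw [hV]
    exact Finset.prod_ne_zero_iff.mpr fun j _ => neg_ne_zero.mpr (rescale_exp_ne_zero _)
  have hPne : P ≠ 0 := by
    rw [hP]
    refine Finset.prod_ne_zero_iff.mpr fun j _ => ?_
    intro h
    have := congrArg (PowerSeries.coeff 1) h
    simp [PowerSeries.coeff_rescale, PowerSeries.exp, PowerSeries.coeff_mk] at this
    exact hw j this
  have h4 : PowerSeries.rescale (-1 : ℝ) (PowerSeries.mk fun k => (B k t u / k.factorial : ℝ))
      = PowerSeries.mk fun k => (B k (-t) u / k.factorial : ℝ) :=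
    mul_right_cancel₀ hPne (mul_left_cancel₀ hVne h3)
  have h5 := congrArg (PowerSeries.coeff k) h4
  rw [PowerSeries.coeff_rescale, PowerSeries.coeff_mk, PowerSeries.coeff_mk] at h5
  have hfac : (k.factorial : ℝ) ≠ 0 := Nat.cast_ne_zero.mpr k.factorial_ne_zero
  field_simp at h5
  linarith
end

section
/- Suppose θ = (θ_1,…,θ_{d−1}) ∈ ℝ^{d−1} is κ-multiplicatively approximable for some κ ≥ 0, i.e., there is c > 0 with m^{1+κ} ∏_{l=1}^{d−1} ⟨θ_l m⟩ > c for all positive integers m, where ⟨x⟩ is the distance from x to ℤ. Then for any rapidly decreasing (Schwartz) function φ on ℝ^d and any T > 0, the series ∑_{m_d ≠ 0} (1/|m_d|) ∏_{l=1}^{d−1} ∑_{m_l ∈ ℤ} (1/|θ_l m_d − m_l|) |φ(T^{−1} m)| converges. -/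
open Finset

/-- distance to nearest integer is symmetric under negation -/
lemma abs_sub_round_neg' (x : ℝ) : |(-x) - round (-x)| = |x - round x| := by
  rw [abs_sub_round_eq_min, abs_sub_round_eq_min]
  rcases eq_or_ne (Int.fract x) 0 with h | h
  · rw [h, Int.fract_neg_eq_zero.mpr h]
  · rw [Int.fract_neg h, sub_sub_cancel, min_comm]

lemma half_le_abs_sub_ne_round {x : ℝ} {n : ℤ} (h : n ≠ round x) : (1:ℝ)/2 ≤ |x - n| := by
  have h1 : (1:ℝ) ≤ |(round x : ℝ) - (n:ℝ)| := by
    rw [← Int.cast_sub, ← Int.cast_abs]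
    exact_mod_cast Int.one_le_abs (sub_ne_zero.mpr (Ne.symm h))
  have h2 : |(round x : ℝ) - n| ≤ |(round x:ℝ) - x| + |x - n| := abs_sub_le _ _ _
  have h3 : |(round x:ℝ) - x| = |x - round x| := abs_sub_comm _ _
  have h4 := abs_sub_round x
  linarith

noncomputable def hfun (N : ℕ) (n : ℤ) : ℝ := (1 + |(n:ℝ)|)⁻¹ ^ N

lemma hfun_nonneg (N : ℕ) (n : ℤ) : 0 ≤ hfun N n := by unfold hfun; positivity

lemma hfun_le_one (N : ℕ) (n : ℤ) : hfun N n ≤ 1 := by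
  unfold hfun
  apply pow_le_one₀ (by positivity)
  rw [inv_le_one_iff₀]
  right
  have := abs_nonneg ((n:ℝ))
  linarith

lemma hfun_summable {N : ℕ} (hN : 2 ≤ N) : Summable (hfun N) := by
  have hnat : Summable fun n : ℕ => (1 + (n:ℝ))⁻¹ ^ N := by
    have := (summable_nat_add_iff (f := fun n : ℕ => (1 / (n:ℝ) ^ N)) 1).mpr
      (Real.summable_one_div_nat_pow.mpr (by omega))
    refine this.congr fun n => ?_
    rw [one_div, ← inv_pow]
    congr 2
    push_cast; ring
  unfold hfun
  refine Summable.of_nat_of_neg (hnat.congr fun n => by norm_num)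
    (hnat.congr fun n => ?_)
  congr 3
  push_cast
  rw [abs_neg, abs_of_nonneg (by positivity)]

lemma summable_pi_prod : ∀ (d : ℕ) (w : Fin d → ℤ → ℝ), (∀ l n, 0 ≤ w l n) →
    (∀ l, Summable (w l)) →
    Summable (fun n : Fin d → ℤ => ∏ l, w l (n l)) ∧
      ∑' n : Fin d → ℤ, ∏ l, w l (n l) = ∏ l, ∑' n, w l n := by
  intro d
  induction d with
  | zero =>
    intro w _ _
    have : Finite (Fin 0 → ℤ) := Finite.of_subsingleton
    refine ⟨Summable.of_finite, ?_⟩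
    rw [tsum_eq_single (fun i => i.elim0) (fun b hb => absurd (Subsingleton.elim b _) hb)]
    simp
  | succ d IH =>
    intro w h0 hs
    obtain ⟨ih1, ih2⟩ := IH (fun l => w l.succ) (fun l n => h0 _ n) (fun l => hs _)
    have hprod : Summable (fun p : ℤ × (Fin d → ℤ) => w 0 p.1 * ∏ l, w l.succ (p.2 l)) := by
      refine (summable_prod_of_nonneg ?_).2 ⟨fun k => ih1.mul_left (w 0 k), ?_⟩
      · intro p; exact mul_nonneg (h0 0 _) (Finset.prod_nonneg fun l _ => h0 _ _)
      · have heq : (fun k => ∑' n : Fin d → ℤ, w 0 k * ∏ l, w l.succ (n l))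
            = fun k => w 0 k * ∑' n : Fin d → ℤ, ∏ l, w l.succ (n l) :=
          funext fun k => tsum_mul_left
        rw [heq]
        exact (hs 0).mul_right _
    have he : ∀ p : ℤ × (Fin d → ℤ),
        ∏ l, w l ((Fin.consEquiv fun _ => ℤ) p l) = w 0 p.1 * ∏ l, w l.succ (p.2 l) := by
      intro p
      rw [Fin.prod_univ_succ]
      simp [Fin.consEquiv]
    have hs' : Summable (fun n : Fin (d+1) → ℤ => ∏ l, w l (n l)) := by
      rw [← (Fin.consEquiv fun _ => ℤ).summable_iff]
      exact hprod.congr (fun p => (he p).symm)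
    refine ⟨hs', ?_⟩
    rw [← (Fin.consEquiv fun _ => ℤ).tsum_eq (fun n : Fin (d+1) → ℤ => ∏ l, w l (n l))]
    rw [tsum_congr he]
    rw [Summable.tsum_prod' hprod (fun k => ih1.mul_left (w 0 k))]
    have heq2 : (fun k => ∑' n : Fin d → ℤ, w 0 k * ∏ l, w l.succ (n l))
        = fun k => w 0 k * ∑' n : Fin d → ℤ, ∏ l, w l.succ (n l) :=
      funext fun k => tsum_mul_left
    rw [heq2, tsum_mul_right, ih2, Fin.prod_univ_succ]

noncomputable def wfun (θl : ℝ) (N : ℕ) (k n : ℤ) : ℝ :=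
  2 * hfun N n + (if n = round (θl * (k:ℝ)) then |θl * (k:ℝ) - round (θl * (k:ℝ))|⁻¹ else 0)

lemma wfun_nonneg (θl : ℝ) (N : ℕ) (k n : ℤ) : 0 ≤ wfun θl N k n := by
  unfold wfun
  have := hfun_nonneg N n
  have : (0:ℝ) ≤ (if n = round (θl * (k:ℝ)) then |θl * (k:ℝ) - round (θl * (k:ℝ))|⁻¹ else 0) := by
    split <;> positivity
  have := hfun_nonneg N n
  linarith

lemma wfun_summable (θl : ℝ) {N : ℕ} (hN : 2 ≤ N) (k : ℤ) : Summable (wfun θl N k) := by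
  unfold wfun
  exact ((hfun_summable hN).mul_left 2).add
    (summable_of_ne_finset_zero (s := {round (θl * (k:ℝ))}) (fun b hb => if_neg (by simpa using hb)))

lemma wfun_tsum (θl : ℝ) {N : ℕ} (hN : 2 ≤ N) (k : ℤ) :
    ∑' n, wfun θl N k n = 2 * (∑' n, hfun N n) + |θl * (k:ℝ) - round (θl * (k:ℝ))|⁻¹ := by
  unfold wfun
  rw [Summable.tsum_add ((hfun_summable hN).mul_left 2)
    (summable_of_ne_finset_zero (s := {round (θl * (k:ℝ))}) (fun b hb => if_neg (by simpa using hb))),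
    tsum_mul_left, tsum_ite_eq]

lemma hfun_div_le_wfun (θl : ℝ) (N : ℕ) (k n : ℤ)
    (hpos : 0 < |θl * (k:ℝ) - round (θl * (k:ℝ))|) :
    hfun N n * (1 / |θl * (k:ℝ) - (n:ℝ)|) ≤ wfun θl N k n := by
  unfold wfun
  by_cases hn : n = round (θl * (k:ℝ))
  · rw [if_pos hn]
    have h1 : hfun N n * (1 / |θl * (k:ℝ) - (n:ℝ)|) ≤ |θl * (k:ℝ) - round (θl * (k:ℝ))|⁻¹ := by
      rw [hn]
      rw [one_div]
      calc hfun N (round (θl * (k:ℝ))) * |θl * (k:ℝ) - (round (θl * (k:ℝ)) : ℝ)|⁻¹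
          ≤ 1 * |θl * (k:ℝ) - (round (θl * (k:ℝ)) : ℝ)|⁻¹ :=
            mul_le_mul_of_nonneg_right (hfun_le_one _ _) (by positivity)
        _ = |θl * (k:ℝ) - (round (θl * (k:ℝ)) : ℝ)|⁻¹ := one_mul _
    have h2 : 0 ≤ 2 * hfun N n := by have := hfun_nonneg N n; linarith
    linarith
  · rw [if_neg hn]
    have h1 : 1 / |θl * (k:ℝ) - (n:ℝ)| ≤ 2 := by
      have := half_le_abs_sub_ne_round (x := θl * (k:ℝ)) (n := n) hn
      rw [div_le_iff₀ (by linarith)]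
      linarith
    calc hfun N n * (1 / |θl * (k:ℝ) - (n:ℝ)|) ≤ hfun N n * 2 :=
        mul_le_mul_of_nonneg_left h1 (hfun_nonneg N n)
      _ = 2 * hfun N n + 0 := by ring

lemma schwartz_decay_bound {E : Type*} [NormedAddCommGroup E] [NormedSpace ℝ E]
    (φ : SchwartzMap E ℝ) (K : ℕ) :
    ∃ C : ℝ, 0 < C ∧ ∀ x, (1+‖x‖)^K * ‖φ x‖ ≤ C := by
  obtain ⟨C0, hC0pos, hC0⟩ := φ.decay 0 0
  obtain ⟨C1, hC1pos, hC1⟩ := φ.decay K 0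
  refine ⟨2^K * (C0 + C1), by positivity, fun x => ?_⟩
  have hx0 := hC0 x
  have hx1 := hC1 x
  rw [norm_iteratedFDeriv_zero] at hx0 hx1
  rw [pow_zero, one_mul] at hx0
  have hb : (1+‖x‖)^K ≤ 2^K * (1 + ‖x‖^K) := by
    calc (1+‖x‖)^K ≤ (2 * max 1 ‖x‖)^K := by
          apply pow_le_pow_left₀ (by positivity)
          have h1 := le_max_left 1 ‖x‖
          have h2 := le_max_right 1 ‖x‖
          linarith
      _ = 2^K * (max 1 ‖x‖)^K := mul_pow _ _ _
      _ ≤ 2^K * (1 + ‖x‖^K) := by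
          apply mul_le_mul_of_nonneg_left _ (by positivity)
          rcases max_cases 1 ‖x‖ with ⟨he, _⟩ | ⟨he, _⟩
          · rw [he, one_pow]
            have : (0:ℝ) ≤ ‖x‖^K := by positivity
            linarith
          · rw [he]
            linarith
  calc (1+‖x‖)^K * ‖φ x‖ ≤ (2^K * (1 + ‖x‖^K)) * ‖φ x‖ :=
        mul_le_mul_of_nonneg_right hb (norm_nonneg _)
    _ = 2^K * (‖φ x‖ + ‖x‖^K * ‖φ x‖) := by ring
    _ ≤ 2^K * (C0 + C1) := by
        apply mul_le_mul_of_nonneg_left _ (by positivity)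
        exact add_le_add hx0 hx1

lemma hfun_eq (N : ℕ) (n : ℤ) : hfun N n = ((1 + |(n:ℝ)|)^N)⁻¹ := by
  unfold hfun; rw [inv_pow]

/-- If `θ = (θ_1,…,θ_{d−1})` is `κ`-multiplicatively approximable (here `d − 1` is
denoted `d` and the last coordinate of `ℤ^{d}` plays the role of `m_d`), then for any
Schwartz function `φ` on `ℝ^{d+1}` and any `T > 0`, the series
`∑_{m_{last} ≠ 0} (1/|m_{last}|) ∏_l (1/|θ_l m_{last} − m_l|) |φ(T⁻¹ m)|` converges. -/
theorem lattice_sum_summable (d : ℕ) (θ : Fin d → ℝ) (κ : ℝ) (hκ : 0 ≤ κ)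
    (c : ℝ) (hc : 0 < c)
    (happrox : ∀ m : ℕ, 0 < m →
      (m : ℝ) ^ ((1 : ℝ) + κ) * ∏ l : Fin d, |θ l * m - round (θ l * m)| > c)
    (φ : SchwartzMap (Fin (d + 1) → ℝ) ℝ) (T : ℝ) (hT : 0 < T) :
    Summable fun m : Fin (d + 1) → ℤ =>
      if m (Fin.last d) = 0 then 0 else
        (1 / |(m (Fin.last d) : ℝ)|) *
          (∏ l : Fin d, 1 / |θ l * (m (Fin.last d) : ℝ) - (m (Fin.castSucc l) : ℝ)|) *
          |φ (fun j => T⁻¹ * (m j : ℝ))| := by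
  classical
  set N : ℕ := ⌈κ⌉₊ + 3 with hNdef
  have hN2 : 2 ≤ N := by omega
  have hsum_h : Summable (hfun N) := hfun_summable hN2
  set A : ℝ := ∑' n, hfun N n with hAdef
  have hA0 : 0 ≤ A := tsum_nonneg fun n => hfun_nonneg N n
  have h2A : (0:ℝ) < 2*A+1 := by linarith
  -- key approximation facts
  have hkey : ∀ k : ℤ, k ≠ 0 →
      c < |(k:ℝ)| ^ ((1:ℝ)+κ) * ∏ l, |θ l * (k:ℝ) - round (θ l * (k:ℝ))| := by
    intro k hk
    have hm : 0 < k.natAbs := Int.natAbs_pos.mpr hk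
    have h1 := happrox k.natAbs hm
    have hcast : ((k.natAbs : ℕ) : ℝ) = |(k:ℝ)| := by
      rw [Nat.cast_natAbs, Int.cast_abs]
    rw [hcast] at h1
    have heq : ∀ l : Fin d,
        |θ l * |(k:ℝ)| - round (θ l * |(k:ℝ)|)| = |θ l * (k:ℝ) - round (θ l * (k:ℝ))| := by
      intro l
      rcases abs_choice (k:ℝ) with h | h
      · rw [h]
      · rw [h, mul_neg]
        exact abs_sub_round_neg' _
    calc c < |(k:ℝ)| ^ ((1:ℝ)+κ) * ∏ l, |θ l * |(k:ℝ)| - round (θ l * |(k:ℝ)|)| := h1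
      _ = |(k:ℝ)| ^ ((1:ℝ)+κ) * ∏ l, |θ l * (k:ℝ) - round (θ l * (k:ℝ))| := by
          rw [Finset.prod_congr rfl fun l _ => heq l]
  have habs_pos : ∀ k : ℤ, k ≠ 0 → (0:ℝ) < |(k:ℝ)| := by
    intro k hk
    exact abs_pos.mpr (Int.cast_ne_zero.mpr hk)
  have hone_le : ∀ k : ℤ, k ≠ 0 → (1:ℝ) ≤ |(k:ℝ)| := by
    intro k hk
    rw [← Int.cast_abs]
    exact_mod_cast Int.one_le_abs hk
  have hprodpos : ∀ k : ℤ, k ≠ 0 → 0 < ∏ l, |θ l * (k:ℝ) - round (θ l * (k:ℝ))| := by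
    intro k hk
    have hQ : 0 < |(k:ℝ)| ^ ((1:ℝ)+κ) := Real.rpow_pos_of_pos (habs_pos k hk) _
    rcases mul_pos_iff.mp (hc.trans (hkey k hk)) with ⟨_, h⟩ | ⟨h, _⟩
    · exact h
    · linarith
  have hδpos : ∀ k : ℤ, k ≠ 0 → ∀ l : Fin d,
      0 < |θ l * (k:ℝ) - round (θ l * (k:ℝ))| := by
    intro k hk l
    rcases (abs_nonneg (θ l * (k:ℝ) - round (θ l * (k:ℝ)))).lt_or_eq with h | h
    · exact h
    · exfalso
      exact (hprodpos k hk).ne'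
        (Finset.prod_eq_zero_iff.mpr ⟨l, Finset.mem_univ l, h.symm⟩)
  have hδprod : ∀ k : ℤ, k ≠ 0 →
      ∏ l, (|θ l * (k:ℝ) - round (θ l * (k:ℝ))|)⁻¹ ≤ |(k:ℝ)| ^ ((1:ℝ)+κ) / c := by
    intro k hk
    have hP := hprodpos k hk
    rw [Finset.prod_inv_distrib, le_div_iff₀ hc]
    have h2 : (∏ l, |θ l * (k:ℝ) - round (θ l * (k:ℝ))|)⁻¹ * c
        ≤ (∏ l, |θ l * (k:ℝ) - round (θ l * (k:ℝ))|)⁻¹ *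
          (|(k:ℝ)|^((1:ℝ)+κ) * ∏ l, |θ l * (k:ℝ) - round (θ l * (k:ℝ))|) :=
      mul_le_mul_of_nonneg_left (hkey k hk).le (by positivity)
    calc (∏ l, |θ l * (k:ℝ) - round (θ l * (k:ℝ))|)⁻¹ * c ≤ _ := h2
      _ = |(k:ℝ)|^((1:ℝ)+κ) := by
          rw [mul_comm (|(k:ℝ)|^((1:ℝ)+κ)), ← mul_assoc, inv_mul_cancel₀ hP.ne', one_mul]
  -- Schwartz decay
  obtain ⟨C, hCpos, hCdecay⟩ := schwartz_decay_bound φ (N*(d+1))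
  set τ : ℝ := max 1 T with hτdef
  have hτ1 : (1:ℝ) ≤ τ := le_max_left _ _
  have hτT : T ≤ τ := le_max_right _ _
  set B : ℝ := C * τ^(N*(d+1)) with hBdef
  have hBpos : 0 < B := by
    apply mul_pos hCpos
    apply pow_pos (by linarith)
  have hφm : ∀ m : Fin (d+1) → ℤ, |φ (fun j => T⁻¹ * (m j : ℝ))| ≤ B * ∏ j, hfun N (m j) := by
    intro m
    set x : Fin (d+1) → ℝ := fun j => T⁻¹ * (m j : ℝ) with hx
    have hmj : ∀ j, |(m j : ℝ)| ≤ T * ‖x‖ := by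
      intro j
      have h1 : |x j| ≤ ‖x‖ := by
        have := norm_le_pi_norm x j
        simpa [Real.norm_eq_abs] using this
      have h2 : (m j : ℝ) = T * x j := by
        rw [hx]; field_simp
      rw [h2, abs_mul, abs_of_pos hT]
      exact mul_le_mul_of_nonneg_left h1 hT.le
    have hstep : ∏ j, (1 + |(m j:ℝ)|)^N ≤ τ^(N*(d+1)) * (1+‖x‖)^(N*(d+1)) := by
      calc ∏ j, (1 + |(m j:ℝ)|)^N ≤ ∏ _j : Fin (d+1), (τ * (1+‖x‖))^N := by
            apply Finset.prod_le_prod (fun j _ => by positivity)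
            intro j _
            apply pow_le_pow_left₀ (by positivity)
            have h1 := hmj j
            have h2 : T * ‖x‖ ≤ τ * ‖x‖ := mul_le_mul_of_nonneg_right hτT (norm_nonneg _)
            have h3 := norm_nonneg x
            nlinarith
        _ = (τ * (1+‖x‖))^(N*(d+1)) := by
            rw [Finset.prod_const, Finset.card_univ, Fintype.card_fin, ← pow_mul]
        _ = τ^(N*(d+1)) * (1+‖x‖)^(N*(d+1)) := mul_pow _ _ _
    have hQpos : 0 < ∏ j, (1 + |(m j:ℝ)|) ^ N := by
      apply Finset.prod_pos; intro j _; positivity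
    have hunfold : ∏ j, hfun N (m j) = (∏ j, (1 + |(m j:ℝ)|) ^ N)⁻¹ := by
      rw [← Finset.prod_inv_distrib]
      exact Finset.prod_congr rfl fun j _ => hfun_eq N (m j)
    rw [hunfold, ← div_eq_mul_inv, le_div_iff₀ hQpos]
    calc |φ x| * ∏ j, (1+|(m j:ℝ)|)^N ≤ |φ x| * (τ^(N*(d+1)) * (1+‖x‖)^(N*(d+1))) :=
          mul_le_mul_of_nonneg_left hstep (abs_nonneg _)
      _ = τ^(N*(d+1)) * ((1+‖x‖)^(N*(d+1)) * ‖φ x‖) := by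
          rw [Real.norm_eq_abs]; ring
      _ ≤ τ^(N*(d+1)) * C := mul_le_mul_of_nonneg_left (hCdecay x) (by positivity)
      _ = B := by rw [hBdef]; ring
  -- the majorant on the product space
  set W : ℤ × (Fin d → ℤ) → ℝ := fun p => if p.1 = 0 then 0 else
      (B / |(p.1:ℝ)|) * hfun N p.1 * ∏ l, wfun (θ l) N p.1 (p.2 l) with hWdef
  have hW0 : ∀ p, 0 ≤ W p := by
    intro p
    rw [hWdef]
    dsimp only
    split
    · exact le_refl _
    · exact mul_nonneg (mul_nonneg (by positivity) (hfun_nonneg N _))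
        (Finset.prod_nonneg fun l _ => wfun_nonneg _ _ _ _)
  have hWfiber : ∀ k, Summable fun n : Fin d → ℤ => W (k, n) := by
    intro k
    by_cases hk : k = 0
    · simpa [hWdef, hk] using summable_zero
    · have h1 := (summable_pi_prod d (fun l => wfun (θ l) N k)
        (fun l n => wfun_nonneg _ _ _ _) (fun l => wfun_summable (θ l) hN2 k)).1
      exact (h1.mul_left ((B / |(k:ℝ)|) * hfun N k)).congr fun n => by simp [hWdef, hk]
  have hWtsum : ∀ k, ∑' n : Fin d → ℤ, W (k, n) =
      if k = 0 then 0 else (B / |(k:ℝ)|) * hfun N k *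
        ∏ l, (2*A + |θ l * (k:ℝ) - round (θ l * (k:ℝ))|⁻¹) := by
    intro k
    by_cases hk : k = 0
    · simp [hWdef, hk]
    · rw [if_neg hk]
      have hps := summable_pi_prod d (fun l => wfun (θ l) N k)
        (fun l n => wfun_nonneg _ _ _ _) (fun l => wfun_summable (θ l) hN2 k)
      calc ∑' n : Fin d → ℤ, W (k,n)
          = ∑' n : Fin d → ℤ, (B / |(k:ℝ)|) * hfun N k * ∏ l, wfun (θ l) N k (n l) :=
            tsum_congr fun n => by simp [hWdef, hk]
        _ = (B / |(k:ℝ)|) * hfun N k * ∑' n : Fin d → ℤ, ∏ l, wfun (θ l) N k (n l) :=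
            tsum_mul_left
        _ = (B / |(k:ℝ)|) * hfun N k * ∏ l, ∑' n, wfun (θ l) N k n := by rw [hps.2]
        _ = _ := by
            congr 1
            exact Finset.prod_congr rfl fun l _ => by rw [wfun_tsum (θ l) hN2 k, hAdef]
  have hWsum : Summable W := by
    refine (summable_prod_of_nonneg hW0).2 ⟨hWfiber, ?_⟩
    have hmaj : Summable fun k : ℤ => (B * (2*A+1)^d / c) * hfun 2 k :=
      (hfun_summable le_rfl).mul_left _
    refine Summable.of_nonneg_of_le (fun k => tsum_nonneg fun n => hW0 (k, n)) ?_ hmaj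
    intro k
    rw [hWtsum k]
    by_cases hk : k = 0
    · rw [if_pos hk]
      exact mul_nonneg (div_nonneg (mul_nonneg hBpos.le (pow_nonneg h2A.le d)) hc.le)
        (hfun_nonneg 2 k)
    · rw [if_neg hk]
      have hk1 := hone_le k hk
      have hkpos := habs_pos k hk
      have e1 : ∏ l, (2*A + |θ l * (k:ℝ) - round (θ l * (k:ℝ))|⁻¹)
          ≤ (2*A+1)^d * ∏ l, |θ l * (k:ℝ) - round (θ l * (k:ℝ))|⁻¹ := by
        have step : ∀ l : Fin d, 2*A + |θ l * (k:ℝ) - round (θ l * (k:ℝ))|⁻¹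
            ≤ (2*A+1) * |θ l * (k:ℝ) - round (θ l * (k:ℝ))|⁻¹ := by
          intro l
          have hδl := hδpos k hk l
          have hδhalf : |θ l * (k:ℝ) - round (θ l * (k:ℝ))| ≤ 1/2 := abs_sub_round _
          have hmul : |θ l * (k:ℝ) - round (θ l * (k:ℝ))| *
              |θ l * (k:ℝ) - round (θ l * (k:ℝ))|⁻¹ = 1 := mul_inv_cancel₀ hδl.ne'
          have hinv : (1:ℝ) ≤ |θ l * (k:ℝ) - round (θ l * (k:ℝ))|⁻¹ := by
            nlinarith [hmul, hδl, hδhalf]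
          nlinarith [mul_nonneg hA0 (sub_nonneg.mpr hinv)]
        calc ∏ l, (2*A + |θ l * (k:ℝ) - round (θ l * (k:ℝ))|⁻¹)
            ≤ ∏ l, ((2*A+1) * |θ l * (k:ℝ) - round (θ l * (k:ℝ))|⁻¹) := by
              apply Finset.prod_le_prod
              · intro l _
                have := hδpos k hk l
                positivity
              · intro l _; exact step l
          _ = (2*A+1)^d * ∏ l, |θ l * (k:ℝ) - round (θ l * (k:ℝ))|⁻¹ := by
              rw [Finset.prod_mul_distrib, Finset.prod_const, Finset.card_univ,
                Fintype.card_fin]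
    -- continue
      have e2 := hδprod k hk
      have e3 : |(k:ℝ)|^((1:ℝ)+κ) = |(k:ℝ)| * |(k:ℝ)|^κ := by
        rw [Real.rpow_add hkpos, Real.rpow_one]
      have hbpos : (0:ℝ) < 1 + |(k:ℝ)| := by linarith
      have e4 : hfun N k * |(k:ℝ)|^κ ≤ hfun 2 k := by
        have s1 : |(k:ℝ)|^κ ≤ (1+|(k:ℝ)|)^(⌈κ⌉₊:ℕ) := by
          calc |(k:ℝ)|^κ ≤ (1+|(k:ℝ)|)^κ :=
              Real.rpow_le_rpow (abs_nonneg _) (by linarith) hκ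
            _ ≤ (1+|(k:ℝ)|)^((⌈κ⌉₊:ℕ):ℝ) :=
              Real.rpow_le_rpow_of_exponent_le (by linarith) (Nat.le_ceil κ)
            _ = (1+|(k:ℝ)|)^(⌈κ⌉₊:ℕ) := Real.rpow_natCast _ _
        have hu' : (1+|(k:ℝ)|)⁻¹^(⌈κ⌉₊:ℕ) * (1+|(k:ℝ)|)^(⌈κ⌉₊:ℕ) = 1 := by
          rw [inv_pow, inv_mul_cancel₀ (pow_ne_zero _ hbpos.ne')]
        have key : hfun N k * (1+|(k:ℝ)|)^(⌈κ⌉₊:ℕ) = (1+|(k:ℝ)|)⁻¹^3 := by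
          calc hfun N k * (1+|(k:ℝ)|)^(⌈κ⌉₊:ℕ)
              = (1+|(k:ℝ)|)⁻¹^(⌈κ⌉₊:ℕ) * (1+|(k:ℝ)|)⁻¹^3 * (1+|(k:ℝ)|)^(⌈κ⌉₊:ℕ) := by
                unfold hfun
                rw [hNdef, ← pow_add]
            _ = (1+|(k:ℝ)|)⁻¹^3 * ((1+|(k:ℝ)|)⁻¹^(⌈κ⌉₊:ℕ) * (1+|(k:ℝ)|)^(⌈κ⌉₊:ℕ)) := by ring
            _ = (1+|(k:ℝ)|)⁻¹^3 := by rw [hu', mul_one]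
        have hu1 : (1+|(k:ℝ)|)⁻¹ ≤ 1 := by
          rw [inv_le_one_iff₀]; right; linarith
        calc hfun N k * |(k:ℝ)|^κ ≤ hfun N k * (1+|(k:ℝ)|)^(⌈κ⌉₊:ℕ) :=
            mul_le_mul_of_nonneg_left s1 (hfun_nonneg N k)
          _ = (1+|(k:ℝ)|)⁻¹^3 := key
          _ ≤ (1+|(k:ℝ)|)⁻¹^2 := pow_le_pow_of_le_one (by positivity) hu1 (by norm_num)
          _ = hfun 2 k := rfl
      calc (B/|(k:ℝ)|) * hfun N k * ∏ l, (2*A + |θ l * (k:ℝ) - round (θ l * (k:ℝ))|⁻¹)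
          ≤ (B/|(k:ℝ)|) * hfun N k * ((2*A+1)^d * (|(k:ℝ)|^((1:ℝ)+κ)/c)) := by
            apply mul_le_mul_of_nonneg_left _
              (mul_nonneg (by positivity) (hfun_nonneg N k))
            exact le_trans e1 (mul_le_mul_of_nonneg_left e2 (pow_nonneg h2A.le d))
        _ = (B * (2*A+1)^d / c) * (hfun N k * |(k:ℝ)|^κ) := by
            rw [e3]
            field_simp
        _ ≤ (B * (2*A+1)^d / c) * hfun 2 k := by
            apply mul_le_mul_of_nonneg_left e4
            exact div_nonneg (mul_nonneg hBpos.le (pow_nonneg h2A.le d)) hc.le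
  -- transport to the pi type
  have hWpi : Summable fun m : Fin (d+1) → ℤ =>
      W (m (Fin.last d), fun l => m (Fin.castSucc l)) := by
    have h1 := (Equiv.summable_iff (Fin.snocEquiv (fun _ : Fin (d+1) => ℤ)).symm
      (f := W)).mpr hWsum
    exact h1.congr fun m => rfl
  -- final comparison
  refine Summable.of_nonneg_of_le ?_ ?_ hWpi
  · intro m
    by_cases hk : m (Fin.last d) = 0
    · rw [if_pos hk]
    · rw [if_neg hk]
      positivity
  · intro m
    by_cases hk : m (Fin.last d) = 0
    · rw [if_pos hk]
      have : W (m (Fin.last d), fun l => m (Fin.castSucc l)) = 0 := by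
        simp [hWdef, hk]
      rw [this]
    · rw [if_neg hk]
      calc (1 / |(m (Fin.last d):ℝ)|) *
            (∏ l, 1 / |θ l * (m (Fin.last d):ℝ) - (m (Fin.castSucc l) : ℝ)|) *
            |φ fun j => T⁻¹ * (m j:ℝ)|
          ≤ (1 / |(m (Fin.last d):ℝ)|) *
            (∏ l, 1 / |θ l * (m (Fin.last d):ℝ) - (m (Fin.castSucc l) : ℝ)|) *
            (B * ∏ j, hfun N (m j)) := by
            apply mul_le_mul_of_nonneg_left (hφm m) (by positivity)
        _ = (B / |(m (Fin.last d):ℝ)|) * hfun N (m (Fin.last d)) *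
            ∏ l, (hfun N (m (Fin.castSucc l)) *
              (1 / |θ l * (m (Fin.last d):ℝ) - (m (Fin.castSucc l) : ℝ)|)) := by
            rw [Fin.prod_univ_castSucc (f := fun j => hfun N (m j)), Finset.prod_mul_distrib]
            ring
        _ ≤ (B / |(m (Fin.last d):ℝ)|) * hfun N (m (Fin.last d)) *
            ∏ l, wfun (θ l) N (m (Fin.last d)) (m (Fin.castSucc l)) := by
            apply mul_le_mul_of_nonneg_left _
              (mul_nonneg (by positivity) (hfun_nonneg N _))
            apply Finset.prod_le_prod
            · intro l _
              exact mul_nonneg (hfun_nonneg _ _) (by positivity)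
            · intro l _
              exact hfun_div_le_wfun (θ l) N (m (Fin.last d)) _ (hδpos _ hk l)
        _ = W (m (Fin.last d), fun l => m (Fin.castSucc l)) := by
            simp [hWdef, hk]
end
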